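/- arXiv:0709.1890 — 3 statements merged into one kernel-verified Lean document; each statement's English description precedes it below -/
import Mathlib

section
/- Let b, c ∈ ℂ[y,z] and suppose (b∂y + c∂z)(y(vy − uz)) ∈ ⟨y(vy − uz)⟩ where y and vy − uz are coprime linear forms. Then (b∂y + c∂z)(y) ∈ ⟨y⟩ and (b∂y + c∂z)(vy − uz) ∈ ⟨vy − uz⟩. -/
/-!
Write `θ` for the derivation and `ℓ = vy − uz`. By the Leibniz rule
`θ(yℓ) = y θ(ℓ) + ℓ θ(y)`, so `y ∣ θ(yℓ)` gives `y ∣ ℓ θ(y)`; as `y` and `ℓ` are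
non-associated primes, `y ∣ θ(y)`. Symmetrically `ℓ ∣ θ(ℓ)`.
-/

open MvPolynomial

theorem Derivation.dvd_apply_of_dvd_apply_mul {R A : Type*} [CommSemiring R] [CommRing A]
    [Algebra R A] (D : Derivation R A A) {p q : A} (hp : Prime p) (hpq : ¬ p ∣ q)
    (h : p ∣ D (p * q)) : p ∣ D p := by
  rw [D.leibniz, smul_eq_mul, smul_eq_mul, dvd_add_right (dvd_mul_right p _)] at h
  exact (hp.dvd_or_dvd h).resolve_left hpq

namespace MvPolynomial

variable {σ K : Type*} [Field K] {i j : σ}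

theorem not_X_dvd_C_mul_X_sub_C_mul_X (hij : i ≠ j) (a : K) {b : K} (hb : b ≠ 0) :
    ¬ (X i : MvPolynomial σ K) ∣ C a * X i - C b * X j := by
  have hCb : IsUnit (C b : MvPolynomial σ K) := hb.isUnit.map C
  rw [dvd_sub_right (dvd_mul_left (X i) (C a)), hCb.dvd_mul_left, X_dvd_X]
  exact hij

theorem coeff_C_mul_X_sub_C_mul_X (hij : i ≠ j) (a b : K) :
    coeff (Finsupp.single j 1) (C a * X i - C b * X j : MvPolynomial σ K) = -b := by
  classical
  simp [coeff_X, Finsupp.single_left_inj, hij]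

theorem prime_C_mul_X_sub_C_mul_X (hij : i ≠ j) (a : K) {b : K} (hb : b ≠ 0) :
    Prime (C a * X i - C b * X j : MvPolynomial σ K) := by
  have hcoeff := coeff_C_mul_X_sub_C_mul_X hij a b
  refine (irreducible_of_totalDegree_eq_one ?_ fun x hx ↦ ?_).prime
  · refine le_antisymm ?_ ?_
    · refine (totalDegree_sub _ _).trans (max_le ?_ ?_) <;>
        exact (totalDegree_mul _ _).trans (by simp)
    · refine le_of_eq_of_le ?_ (le_totalDegree (s := Finsupp.single j 1) ?_)
      · simp
      · simp [mem_support_iff, hcoeff, hb]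
  · refine Ne.isUnit ?_
    rintro rfl
    simpa [hcoeff, hb] using hx (Finsupp.single j 1)

end MvPolynomial

/-- If the derivation `b∂y + c∂z` is tangent to the product
`y(vy − uz)` of the two coprime linear forms `y` and `vy − uz` (coprimality: `u ≠ 0`),
then it is tangent to each factor. -/
theorem tangent_to_product_of_lines
    (b c : MvPolynomial (Fin 2) ℂ) (u v : ℂ) (hu : u ≠ 0)
    (h : b * pderiv 0 (X 0 * (C v * X 0 - C u * X 1)) +
          c * pderiv 1 (X 0 * (C v * X 0 - C u * X 1)) ∈
        Ideal.span {X 0 * (C v * X 0 - C u * X 1)}) :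
    b * pderiv 0 (X 0 : MvPolynomial (Fin 2) ℂ) + c * pderiv 1 (X 0 : MvPolynomial (Fin 2) ℂ) ∈
        Ideal.span {(X 0 : MvPolynomial (Fin 2) ℂ)} ∧
    b * pderiv 0 (C v * X 0 - C u * X 1) + c * pderiv 1 (C v * X 0 - C u * X 1) ∈
        Ideal.span {(C v * X 0 - C u * X 1 : MvPolynomial (Fin 2) ℂ)} := by
  set ℓ : MvPolynomial (Fin 2) ℂ := C v * X 0 - C u * X 1
  let θ : Derivation ℂ (MvPolynomial (Fin 2) ℂ) (MvPolynomial (Fin 2) ℂ) :=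
    b • pderiv 0 + c • pderiv 1
  change θ (X 0 * ℓ) ∈ _ at h
  change θ (X 0) ∈ _ ∧ θ ℓ ∈ _
  simp only [Ideal.mem_span_singleton] at h ⊢
  have hX : Prime (X 0 : MvPolynomial (Fin 2) ℂ) := X_prime
  have hℓ : Prime ℓ := prime_C_mul_X_sub_C_mul_X zero_ne_one v hu
  have hXℓ : ¬ X 0 ∣ ℓ := not_X_dvd_C_mul_X_sub_C_mul_X zero_ne_one v hu
  have hℓX : ¬ ℓ ∣ X 0 := fun hd ↦ hXℓ (hℓ.irreducible.dvd_symm hX.irreducible hd)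
  refine ⟨θ.dvd_apply_of_dvd_apply_mul hX hXℓ (dvd_of_mul_right_dvd h), ?_⟩
  rw [mul_comm] at h
  exact θ.dvd_apply_of_dvd_apply_mul hℓ hℓX (dvd_of_mul_right_dvd h)
end

section
/- Let C = V(y² − xz) ⊂ ℙ² and let ψ: ℂ[x,y,z] → ℂ[s,t] be the ring homomorphism with ψ(x) = s², ψ(y) = st, ψ(z) = t². If a₁, a₂, a₃ ∈ ℂ[x,y,z] satisfy −z a₁ + 2y a₂ − x a₃ ∈ ⟨y² − xz⟩, then t²ψ(a₁) − 2st·ψ(a₂) + s²ψ(a₃) = 0, and there exist Q₁, Q₂ ∈ ℂ[s,t] with ψ(a₁) = sQ₁, ψ(a₂) = (tQ₁ + sQ₂)/2, ψ(a₃) = tQ₂. -/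
open MvPolynomial

/-!
Since `ψ(y² − xz) = 0`, applying `ψ` to the tangency condition gives
`−t²ψ(a₁) + 2st·ψ(a₂) − s²ψ(a₃) = 0`. The variables `s` and `t` are non-associated primes of
`ℂ[s,t]`, so `s ∣ t²ψ(a₁)` forces `s ∣ ψ(a₁)` and likewise `t ∣ ψ(a₃)`; substituting these back
and cancelling `st` gives the middle equation.
-/

theorem aeval_veronese_conic_eq_zero {R S : Type*} [CommRing R] [CommRing S] [Algebra R S]
    (s t : S) :
    aeval ![s ^ 2, s * t, t ^ 2] (X 1 ^ 2 - X 0 * X 2 : MvPolynomial (Fin 3) R) = 0 := by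
  simp only [map_sub, map_mul, map_pow, aeval_X, Matrix.cons_val]
  ring

theorem aeval_veronese_tangent_eq_zero {R S : Type*} [CommRing R] [CommRing S] [Algebra R S]
    (s t : S) {a₁ a₂ a₃ : MvPolynomial (Fin 3) R}
    (h : -(X 2) * a₁ + 2 * X 1 * a₂ - X 0 * a₃ ∈
        Ideal.span {(X 1 ^ 2 - X 0 * X 2 : MvPolynomial (Fin 3) R)}) :
    t ^ 2 * aeval ![s ^ 2, s * t, t ^ 2] a₁ - 2 * (s * t) * aeval ![s ^ 2, s * t, t ^ 2] a₂ +
      s ^ 2 * aeval ![s ^ 2, s * t, t ^ 2] a₃ = 0 := by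
  obtain ⟨c, hc⟩ := Ideal.mem_span_singleton'.mp h
  have hψ := congrArg (aeval ![s ^ 2, s * t, t ^ 2]) hc
  rw [map_mul, aeval_veronese_conic_eq_zero, mul_zero] at hψ
  simp only [map_sub, map_add, map_mul, map_neg, map_ofNat, aeval_X, Matrix.cons_val] at hψ
  linear_combination hψ

theorem exists_eq_mul_of_sq_mul_sub_add_sq_mul_eq_zero {R : Type*} [CommRing R] [IsDomain R]
    {p q A B C : R} (hp : Prime p) (hq : Prime q) (hpq : ¬p ∣ q) (hqp : ¬q ∣ p)
    (h : q ^ 2 * A - 2 * (p * q) * B + p ^ 2 * C = 0) :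
    ∃ Q₁ Q₂, A = p * Q₁ ∧ 2 * B = q * Q₁ + p * Q₂ ∧ C = q * Q₂ := by
  have hA : p ∣ A := by
    have : p ∣ q ^ 2 * A := ⟨2 * q * B - p * C, by linear_combination h⟩
    exact (hp.dvd_or_dvd this).resolve_left fun h' ↦ hpq (hp.dvd_of_dvd_pow h')
  have hC : q ∣ C := by
    have : q ∣ p ^ 2 * C := ⟨2 * p * B - q * A, by linear_combination h⟩
    exact (hq.dvd_or_dvd this).resolve_left fun h' ↦ hqp (hq.dvd_of_dvd_pow h')
  obtain ⟨Q₁, rfl⟩ := hA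
  obtain ⟨Q₂, rfl⟩ := hC
  refine ⟨Q₁, Q₂, rfl, mul_left_cancel₀ (mul_ne_zero hp.ne_zero hq.ne_zero) ?_, rfl⟩
  linear_combination -h

/-- Pulling back a derivation tangent to the conic `C = V(y² − xz)`
along the Veronese parametrization `ψ : x ↦ s², y ↦ st, z ↦ t²` yields
`t²ψ(a₁) − 2st·ψ(a₂) + s²ψ(a₃) = 0`, and hence `ψ(a₁) = sQ₁`,
`2ψ(a₂) = tQ₁ + sQ₂`, `ψ(a₃) = tQ₂` for some `Q₁, Q₂`. -/
theorem veronese_pullback_tangent_conic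
    (a₁ a₂ a₃ : MvPolynomial (Fin 3) ℂ)
    (h : -(X 2) * a₁ + 2 * X 1 * a₂ - X 0 * a₃ ∈
        Ideal.span {(X 1 ^ 2 - X 0 * X 2 : MvPolynomial (Fin 3) ℂ)}) :
    (X 1 ^ 2 * aeval ![X 0 ^ 2, X 0 * X 1, X 1 ^ 2] a₁ -
        2 * (X 0 * X 1) * aeval ![X 0 ^ 2, X 0 * X 1, X 1 ^ 2] a₂ +
        X 0 ^ 2 * aeval ![X 0 ^ 2, X 0 * X 1, X 1 ^ 2] a₃ = (0 : MvPolynomial (Fin 2) ℂ)) ∧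
    ∃ Q₁ Q₂ : MvPolynomial (Fin 2) ℂ,
      aeval ![X 0 ^ 2, X 0 * X 1, X 1 ^ 2] a₁ = X 0 * Q₁ ∧
      2 * aeval ![X 0 ^ 2, X 0 * X 1, X 1 ^ 2] a₂ = X 1 * Q₁ + X 0 * Q₂ ∧
      aeval ![X 0 ^ 2, X 0 * X 1, X 1 ^ 2] a₃ = X 1 * Q₂ := by
  have tangency := aeval_veronese_tangent_eq_zero (X 0 : MvPolynomial (Fin 2) ℂ) (X 1) h
  refine ⟨tangency, exists_eq_mul_of_sq_mul_sub_add_sq_mul_eq_zero X_prime X_prime ?_ ?_ tangency⟩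
  all_goals simp
end

section
/- Let J ⊂ S = ℂ[x,y,z] be the homogeneous ideal J = ⟨y² − xz, g₁, g₂⟩ of 2m+1 distinct reduced points lying on the smooth conic y² − xz = 0, where g₁, g₂ have degree m+1 as constructed from the parametrization. Then S/J has a free resolution of the form 0 → S(−2−m)² → S(−1−m)² ⊕ S(−2) → S → S/J → 0, and J is generated by the 2×2 minors of a 3×2 matrix with rows (x, y), (y, z), (α, β) where α, β are homogeneous of degree m. -/
/-!
Let `ν : ℂ[x,y,z] → ℂ[s,t]` be the Veronese map `x ↦ s², y ↦ st, z ↦ t²`. Modulo `y² - xz` every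
polynomial is `a(x,z) + y b(x,z)`, with image `a(s²,t²) + st b(s²,t²)`; since `1, s, t, st` are free
over `ℂ[s²,t²]`, the kernel of `ν` is `(y² - xz)`. The odd form `f` splits as
`s a(s²,t²) + t b(s²,t²)`, and `β = a(x,z)`, `α = -b(x,z)` give minors with `ν(xβ - yα) = s f`,
`ν(yβ - zα) = t f`. As `ν(gᵢ) = Lᵢ f` and `L₁, L₂` span the linear forms, the two ideals contain
`ker ν` and have the same image, hence coincide. A syzygy `w` of the minors gives
`ν(w₀) t = ν(w₁) s` after cancelling `f`, and by the same parity argument `(w₀, w₁)` lifts to a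
combination of the columns modulo `y² - xz`.
-/

open MvPolynomial

namespace MvPolynomial

variable {σ R : Type*} [CommSemiring R]

theorem coeff_two_nsmul_add_monomial_mul_expand_two (ε e : σ →₀ ℕ) (p : MvPolynomial σ R) :
    coeff (2 • e + ε) (monomial ε 1 * expand 2 p) = coeff e p := by
  rw [coeff_monomial_mul', if_pos le_add_self, one_mul, add_tsub_cancel_right,
    coeff_expand_smul _ two_ne_zero]

theorem coeff_two_nsmul_add_monomial_mul_expand_two_of_ne {ε ε' : σ →₀ ℕ}
    (hε : ∀ i, ε i ≤ 1) (hε' : ∀ i, ε' i ≤ 1) (hne : ε ≠ ε') (e : σ →₀ ℕ)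
    (p : MvPolynomial σ R) : coeff (2 • e + ε') (monomial ε 1 * expand 2 p) = 0 := by
  rw [coeff_monomial_mul']
  split_ifs with hle
  · obtain ⟨i, hi⟩ := DFunLike.ne_iff.mp hne
    rw [coeff_expand_of_not_dvd _ (i := i), mul_zero]
    have := hε i; have := hε' i; have := hle i
    simp only [Finsupp.tsub_apply, Finsupp.add_apply, Finsupp.smul_apply, smul_eq_mul] at *
    omega
  · rfl

theorem eq_zero_of_expand_two_add_X_mul_expand_two_eq_zero
    {p₀ p₁ p₂ p₃ : MvPolynomial (Fin 2) R}
    (h : expand 2 p₀ + X 0 * expand 2 p₁ + X 1 * expand 2 p₂ + X 0 * X 1 * expand 2 p₃ = 0) :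
    p₀ = 0 ∧ p₁ = 0 ∧ p₂ = 0 ∧ p₃ = 0 := by
  let ε : Fin 4 → Fin 2 →₀ ℕ :=
    ![0, Finsupp.single 0 1, Finsupp.single 1 1, Finsupp.single 0 1 + Finsupp.single 1 1]
  have hε : ∀ k i, ε k i ≤ 1 := by
    intro k i
    fin_cases k <;> fin_cases i <;> simp [ε]
  have hε_inj : Function.Injective ε := by
    intro a b hab
    have h₀ := DFunLike.congr_fun hab 0
    have h₁ := DFunLike.congr_fun hab 1
    fin_cases a <;> fin_cases b <;> simp [ε] at h₀ h₁ ⊢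
  have hsum : ∑ k, monomial (ε k) 1 * expand 2 (![p₀, p₁, p₂, p₃] k) = 0 := by
    simpa [Fin.sum_univ_four, ε, X, monomial_mul, ← add_assoc] using h
  have hcoeff : ∀ k e, coeff e (![p₀, p₁, p₂, p₃] k) = 0 := by
    intro k e
    have := congrArg (coeff (2 • e + ε k)) hsum
    rwa [coeff_sum, coeff_zero, Finset.sum_eq_single k
      (fun j _ hj => coeff_two_nsmul_add_monomial_mul_expand_two_of_ne (hε j) (hε k)
        (hε_inj.ne hj) _ _) (by simp),
      coeff_two_nsmul_add_monomial_mul_expand_two] at this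
  refine ⟨?_, ?_, ?_, ?_⟩ <;> ext e
  exacts [hcoeff 0 e, hcoeff 1 e, hcoeff 2 e, hcoeff 3 e]

theorem span_range_eq_homogeneousSubmodule_one {K : Type*} [Field K] {n : ℕ}
    {L : Fin n → MvPolynomial (Fin n) K} (hL : ∀ i, (L i).IsHomogeneous 1)
    (hind : LinearIndependent K L) :
    Submodule.span K (Set.range L) = homogeneousSubmodule (Fin n) K 1 := by
  have hle : Submodule.span K (Set.range L) ≤ homogeneousSubmodule (Fin n) K 1 :=
    Submodule.span_le.mpr (Set.range_subset_iff.mpr hL)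
  rw [homogeneousSubmodule_one_eq_span_X] at hle ⊢
  have : FiniteDimensional K (Submodule.span K (Set.range (X : Fin n → MvPolynomial (Fin n) K))) :=
    FiniteDimensional.span_of_finite K (Set.finite_range _)
  refine Submodule.eq_of_le_of_finrank_le hle ?_
  rw [finrank_span_eq_card hind]
  exact (finrank_range_le_card X).trans (by simp)

theorem IsHomogeneous.exists_eq_C_mul_X_add_C_mul_X {L : MvPolynomial (Fin 2) R}
    (hL : L.IsHomogeneous 1) : ∃ a b : R, L = C a * X 0 + C b * X 1 := by
  rw [← mem_homogeneousSubmodule, homogeneousSubmodule_one_eq_span_X,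
    Submodule.mem_span_range_iff_exists_fun] at hL
  obtain ⟨c, rfl⟩ := hL
  exact ⟨c 0, c 1, by simp [Fin.sum_univ_two, smul_eq_C_mul]⟩

theorem exists_C_mul_add_C_mul_eq {K : Type*} [Field K] {L₁ L₂ P : MvPolynomial (Fin 2) K}
    (hL₁ : L₁.IsHomogeneous 1) (hL₂ : L₂.IsHomogeneous 1) (hind : LinearIndependent K ![L₁, L₂])
    (hP : P.IsHomogeneous 1) : ∃ a b : K, C a * L₁ + C b * L₂ = P := by
  rw [← mem_homogeneousSubmodule, ← span_range_eq_homogeneousSubmodule_one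
    (by simp [Fin.forall_fin_two, hL₁, hL₂]) hind, Submodule.mem_span_range_iff_exists_fun] at hP
  obtain ⟨c, rfl⟩ := hP
  exact ⟨c 0, c 1, by simp [Fin.sum_univ_two, smul_eq_C_mul]⟩

end MvPolynomial

variable (R : Type*) [CommRing R]

noncomputable def veronese : MvPolynomial (Fin 3) R →ₐ[R] MvPolynomial (Fin 2) R :=
  aeval ![X 0 ^ 2, X 0 * X 1, X 1 ^ 2]

variable {R}

@[simp] theorem veronese_X_zero : veronese R (X 0) = X 0 ^ 2 := by simp [veronese]

@[simp] theorem veronese_X_one : veronese R (X 1) = X 0 * X 1 := by simp [veronese]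

@[simp] theorem veronese_X_two : veronese R (X 2) = X 1 ^ 2 := by simp [veronese]

theorem veronese_conic : veronese R (X 1 ^ 2 - X 0 * X 2) = 0 := by
  simp only [map_sub, map_mul, map_pow, veronese_X_zero, veronese_X_one, veronese_X_two]; ring

theorem veronese_rename (a : MvPolynomial (Fin 2) R) :
    veronese R (rename ![0, 2] a) = expand 2 a := by
  rw [← AlgHom.comp_apply]
  congr 1
  ext i : 1
  fin_cases i <;> simp

theorem exists_eq_conic_mul_add_rename_add_X_mul_rename (p : MvPolynomial (Fin 3) R) :
    ∃ h a b, p = (X 1 ^ 2 - X 0 * X 2) * h + rename ![0, 2] a + X 1 * rename ![0, 2] b := by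
  induction p using MvPolynomial.induction_on with
  | C r => exact ⟨0, C r, 0, by simp⟩
  | add p q hp hq =>
    obtain ⟨h, a, b, rfl⟩ := hp
    obtain ⟨h', a', b', rfl⟩ := hq
    exact ⟨h + h', a + a', b + b', by simp only [map_add]; ring⟩
  | mul_X p i hp =>
    obtain ⟨h, a, b, rfl⟩ := hp
    fin_cases i <;> simp only [Fin.zero_eta, Fin.mk_one, Fin.reduceFinMk]
    · exact ⟨X 0 * h, X 0 * a, X 0 * b, by
        simp only [map_mul, rename_X, Matrix.cons_val_zero]; ring⟩
    · exact ⟨X 1 * h + rename ![0, 2] b, X 0 * X 1 * b, a, by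
        simp only [map_mul, rename_X, Matrix.cons_val_zero, Matrix.cons_val_one,
          Matrix.cons_val_fin_one]
        ring⟩
    · exact ⟨X 2 * h, X 1 * a, X 1 * b, by
        simp only [map_mul, rename_X, Matrix.cons_val_one, Matrix.cons_val_fin_one]; ring⟩

theorem ker_veronese : RingHom.ker (veronese R) = Ideal.span {X 1 ^ 2 - X 0 * X 2} := by
  refine le_antisymm (fun p hp => ?_) ?_
  · obtain ⟨h, a, b, rfl⟩ := exists_eq_conic_mul_add_rename_add_X_mul_rename p
    have hab : expand 2 a + X 0 * expand 2 0 + X 1 * expand 2 0 + X 0 * X 1 * expand 2 b = 0 := by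
      simpa [veronese_conic, veronese_rename, add_assoc] using hp
    obtain ⟨rfl, -, -, rfl⟩ := eq_zero_of_expand_two_add_X_mul_expand_two_eq_zero hab
    simpa using Ideal.mul_mem_right h _ (Ideal.mem_span_singleton_self _)
  · rw [Ideal.span_le, Set.singleton_subset_iff]
    exact veronese_conic

theorem exists_lift_of_veronese_mul_X_eq {u v : MvPolynomial (Fin 3) R}
    (huv : veronese R u * X 1 = veronese R v * X 0) :
    ∃ A B h₀ h₁, u = X 0 * A + X 1 * B + (X 1 ^ 2 - X 0 * X 2) * h₀ ∧
      v = X 1 * A + X 2 * B + (X 1 ^ 2 - X 0 * X 2) * h₁ := by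
  obtain ⟨h₀, a₀, b₀, rfl⟩ := exists_eq_conic_mul_add_rename_add_X_mul_rename u
  obtain ⟨h₁, a₁, b₁, rfl⟩ := exists_eq_conic_mul_add_rename_add_X_mul_rename v
  -- `huv` written in the basis `1, s, t, st` over the image of `expand 2`
  have key : expand 2 0 + X 0 * expand 2 (X 1 * b₀ - a₁) + X 1 * expand 2 (a₀ - X 0 * b₁)
      + X 0 * X 1 * expand 2 0 = 0 := by
    simp only [map_add, map_mul, map_sub, map_pow, map_zero, veronese_X_zero, veronese_X_one,
      veronese_X_two, veronese_rename, expand_X] at huv ⊢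
    linear_combination huv
  obtain ⟨-, hb₀, hb₁, -⟩ := eq_zero_of_expand_two_add_X_mul_expand_two_eq_zero key
  refine ⟨rename ![0, 2] b₁, rename ![0, 2] b₀, h₀, h₁, ?_, ?_⟩
  · rw [sub_eq_zero.mp hb₁]; simp only [map_mul, rename_X, Matrix.cons_val_zero]; ring
  · rw [← sub_eq_zero.mp hb₀]
    simp only [map_mul, rename_X, Matrix.cons_val_one, Matrix.cons_val_fin_one]; ring

theorem exists_isHomogeneous_veronese_minors_eq {m : ℕ} {f : MvPolynomial (Fin 2) R}
    (hf : f.IsHomogeneous (2 * m + 1)) :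
    ∃ α β : MvPolynomial (Fin 3) R, α.IsHomogeneous m ∧ β.IsHomogeneous m ∧
      veronese R (X 0 * β - X 1 * α) = X 0 * f ∧ veronese R (X 1 * β - X 2 * α) = X 1 * f := by
  induction hf using IsWeightedHomogeneous.induction_on with
  | zero => exact ⟨0, 0, isHomogeneous_zero _ _ _, isHomogeneous_zero _ _ _, by simp, by simp⟩
  | add p q _ _ hp hq =>
    obtain ⟨α, β, hα, hβ, h₀, h₁⟩ := hp
    obtain ⟨α', β', hα', hβ', h₀', h₁'⟩ := hq
    refine ⟨α + α', β + β', hα.add hα', hβ.add hβ', ?_, ?_⟩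
    · rw [show X 0 * (β + β') - X 1 * (α + α') = (X 0 * β - X 1 * α) + (X 0 * β' - X 1 * α') by
        ring, map_add, h₀, h₀', mul_add]
    · rw [show X 1 * (β + β') - X 2 * (α + α') = (X 1 * β - X 2 * α) + (X 1 * β' - X 2 * α') by
        ring, map_add, h₁, h₁', mul_add]
  | monomial d r hd =>
    have hd' : d 0 + d 1 = 2 * m + 1 := by
      simpa [Finsupp.weight_apply, Finsupp.sum_fintype] using hd
    rw [monomial_eq, Finsupp.prod_fintype _ _ (by simp), Fin.prod_univ_two, ← mul_assoc]
    obtain ⟨i, hi | hi⟩ := Nat.even_or_odd' (d 0)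
    · obtain ⟨j, rfl, hj⟩ : ∃ j, m = i + j ∧ d 1 = 2 * j + 1 := ⟨m - i, by omega, by omega⟩
      refine ⟨-(C r * X 0 ^ i * X 2 ^ j), 0, ?_, isHomogeneous_zero _ _ _, ?_, ?_⟩
      · simpa only [zero_add] using
          (((isHomogeneous_C _ r).mul (isHomogeneous_X_pow 0 i)).mul (isHomogeneous_X_pow 2 j)).neg
      all_goals
        simp only [map_neg, map_sub, map_mul, map_pow, map_zero, mul_zero, algHom_C, algebraMap_eq,
          veronese_X_zero, veronese_X_one, veronese_X_two, hi, hj]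
        ring
    · obtain ⟨j, rfl, hj⟩ : ∃ j, m = i + j ∧ d 1 = 2 * j := ⟨m - i, by omega, by omega⟩
      refine ⟨0, C r * X 0 ^ i * X 2 ^ j, isHomogeneous_zero _ _ _, ?_, ?_, ?_⟩
      · simpa only [zero_add] using
          ((isHomogeneous_C _ r).mul (isHomogeneous_X_pow 0 i)).mul (isHomogeneous_X_pow 2 j)
      all_goals
        simp only [map_sub, map_mul, map_pow, map_zero, mul_zero, algHom_C, algebraMap_eq,
          veronese_X_zero, veronese_X_one, veronese_X_two, hi, hj]
        ring

theorem mem_of_veronese_eq {I : Ideal (MvPolynomial (Fin 3) R)} (hI : X 1 ^ 2 - X 0 * X 2 ∈ I)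
    {p p' : MvPolynomial (Fin 3) R} (hp' : p' ∈ I) (h : veronese R p = veronese R p') : p ∈ I := by
  have hker : RingHom.ker (veronese R) ≤ I := by
    rwa [ker_veronese, Ideal.span_le, Set.singleton_subset_iff]
  simpa using I.add_mem hp' (hker (show p - p' ∈ _ by simp [RingHom.mem_ker, h]))

theorem span_conic_eq_span_minors {K : Type*} [Field K] {f L₁ L₂ : MvPolynomial (Fin 2) K}
    (hL₁ : L₁.IsHomogeneous 1) (hL₂ : L₂.IsHomogeneous 1) (hind : LinearIndependent K ![L₁, L₂])
    {g₁ g₂ α β : MvPolynomial (Fin 3) K}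
    (hg₁ : veronese K g₁ = L₁ * f) (hg₂ : veronese K g₂ = L₂ * f)
    (hΔ₂ : veronese K (X 0 * β - X 1 * α) = X 0 * f)
    (hΔ₁ : veronese K (X 1 * β - X 2 * α) = X 1 * f) :
    Ideal.span {X 1 ^ 2 - X 0 * X 2, g₁, g₂} =
      Ideal.span {X 0 * X 2 - X 1 ^ 2, X 0 * β - X 1 * α, X 1 * β - X 2 * α} := by
  set I := Ideal.span {X 1 ^ 2 - X 0 * X 2, g₁, g₂} with hI
  set I' := Ideal.span {X 0 * X 2 - X 1 ^ 2, X 0 * β - X 1 * α, X 1 * β - X 2 * α} with hI'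
  have hq : X 1 ^ 2 - X 0 * X 2 ∈ I := Ideal.subset_span (by simp)
  have hg₁I : g₁ ∈ I := Ideal.subset_span (by simp)
  have hg₂I : g₂ ∈ I := Ideal.subset_span (by simp)
  have hq' : X 0 * X 2 - X 1 ^ 2 ∈ I' := Ideal.subset_span (by simp)
  have hΔ₂I' : X 0 * β - X 1 * α ∈ I' := Ideal.subset_span (by simp)
  have hΔ₁I' : X 1 * β - X 2 * α ∈ I' := Ideal.subset_span (by simp)
  have mem_I' : ∀ {L g}, L.IsHomogeneous 1 → veronese K g = L * f → g ∈ I' := by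
    intro L g hL hg
    obtain ⟨a, b, rfl⟩ := hL.exists_eq_C_mul_X_add_C_mul_X
    refine mem_of_veronese_eq (by simpa using neg_mem hq')
      (add_mem (I'.mul_mem_left (C a) hΔ₂I') (I'.mul_mem_left (C b) hΔ₁I')) ?_
    simp only [hg, map_add, map_mul, algHom_C, algebraMap_eq, hΔ₂, hΔ₁]; ring
  have mem_I : ∀ {P g}, P.IsHomogeneous 1 → veronese K g = P * f → g ∈ I := by
    intro P g hP hg
    obtain ⟨a, b, hab⟩ := exists_C_mul_add_C_mul_eq hL₁ hL₂ hind hP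
    refine mem_of_veronese_eq hq
      (add_mem (I.mul_mem_left (C a) hg₁I) (I.mul_mem_left (C b) hg₂I)) ?_
    simp only [hg, map_add, map_mul, algHom_C, algebraMap_eq, hg₁, hg₂, ← hab]; ring
  apply le_antisymm <;>
    simp only [hI, hI', Ideal.span_le, Set.insert_subset_iff, Set.singleton_subset_iff,
      SetLike.mem_coe]
  · exact ⟨by simpa using neg_mem hq', mem_I' hL₁ hg₁, mem_I' hL₂ hg₂⟩
  · exact ⟨by simpa using neg_mem hq, mem_I (isHomogeneous_X _ 0) hΔ₂,
      mem_I (isHomogeneous_X _ 1) hΔ₁⟩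

theorem X_zero_mul_X_two_sub_X_one_sq_ne_zero [Nontrivial R] :
    (X 0 * X 2 - X 1 ^ 2 : MvPolynomial (Fin 3) R) ≠ 0 := by
  intro h
  simpa using congrArg (eval ![1, 0, 1]) h

theorem syzygy_iff_mem_span_columns [IsDomain R] {f : MvPolynomial (Fin 2) R} (hf : f ≠ 0)
    {α β : MvPolynomial (Fin 3) R} (hΔ₂ : veronese R (X 0 * β - X 1 * α) = X 0 * f)
    (hΔ₁ : veronese R (X 1 * β - X 2 * α) = X 1 * f) (w : Fin 3 → MvPolynomial (Fin 3) R) :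
    w 0 * (X 1 * β - X 2 * α) - w 1 * (X 0 * β - X 1 * α) + w 2 * (X 0 * X 2 - X 1 ^ 2) = 0 ↔
      w ∈ Submodule.span (MvPolynomial (Fin 3) R) {![X 0, X 1, α], ![X 1, X 2, β]} := by
  rw [Submodule.mem_span_pair]
  constructor
  · intro hw
    have huv : veronese R (w 0) * X 1 = veronese R (w 1) * X 0 := by
      have h := congrArg (veronese R) hw
      simp only [map_add, map_sub, map_mul, map_pow, map_zero, hΔ₁, hΔ₂, veronese_X_zero,
        veronese_X_one, veronese_X_two] at h
      exact mul_right_cancel₀ hf (by linear_combination h)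
    obtain ⟨A, B, h₀, h₁, hw₀, hw₁⟩ := exists_lift_of_veronese_mul_X_eq huv
    have hw₂ : w 2 = A * α + B * β + h₀ * (X 1 * β - X 2 * α) - h₁ * (X 0 * β - X 1 * α) := by
      refine mul_right_cancel₀ X_zero_mul_X_two_sub_X_one_sq_ne_zero (sub_eq_zero.mp ?_)
      linear_combination hw - (X 1 * β - X 2 * α) * hw₀ + (X 0 * β - X 1 * α) * hw₁
    -- `z (x,y,α) - y (y,z,β) = (xz - y², 0, zα - yβ)` and
    -- `x (y,z,β) - y (x,y,α) = (0, xz - y², xβ - yα)` absorb `h₀, h₁`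
    refine ⟨A - X 2 * h₀ + X 1 * h₁, B + X 1 * h₀ - X 0 * h₁, ?_⟩
    funext i
    fin_cases i <;> simp only [Fin.zero_eta, Fin.mk_one, Fin.reduceFinMk, Pi.add_apply,
      Pi.smul_apply, smul_eq_mul, Matrix.cons_val_zero, Matrix.cons_val_one, Matrix.cons_val_two,
      Matrix.head_cons, Matrix.tail_cons]
    · linear_combination -hw₀
    · linear_combination -hw₁
    · linear_combination -hw₂
  · rintro ⟨p, q, rfl⟩
    simp only [Pi.add_apply, Pi.smul_apply, smul_eq_mul, Matrix.cons_val_zero,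
      Matrix.cons_val_one, Matrix.cons_val_two, Matrix.head_cons, Matrix.tail_cons]
    ring

theorem eq_zero_of_smul_add_smul_columns_eq_zero [IsDomain R] (α β : MvPolynomial (Fin 3) R)
    (p q : MvPolynomial (Fin 3) R) (h : p • ![X 0, X 1, α] + q • ![X 1, X 2, β] = 0) :
    p = 0 ∧ q = 0 := by
  have h₀ := congrFun h 0
  have h₁ := congrFun h 1
  simp only [Pi.add_apply, Pi.smul_apply, smul_eq_mul, Matrix.cons_val_zero, Matrix.cons_val_one,
    Pi.zero_apply] at h₀ h₁
  obtain rfl : p = 0 :=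
    (mul_eq_zero.mp (by linear_combination X 2 * h₀ - X 1 * h₁)).resolve_right
      X_zero_mul_X_two_sub_X_one_sq_ne_zero
  exact ⟨rfl, (mul_eq_zero.mp (by linear_combination h₀)).resolve_right (X_ne_zero 1)⟩

theorem hilbert_burch_points_on_conic_general
    (m : ℕ) (f : MvPolynomial (Fin 2) ℂ)
    (hf : f.IsHomogeneous (2 * m + 1)) (hsq : Squarefree f)
    (L₁ L₂ : MvPolynomial (Fin 2) ℂ)
    (hL₁ : L₁.IsHomogeneous 1) (hL₂ : L₂.IsHomogeneous 1)
    (hind : LinearIndependent ℂ ![L₁, L₂])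
    (g₁ g₂ : MvPolynomial (Fin 3) ℂ)
    (hg₁f : aeval ![X 0 ^ 2, X 0 * X 1, X 1 ^ 2] g₁ = L₁ * f)
    (hg₂f : aeval ![X 0 ^ 2, X 0 * X 1, X 1 ^ 2] g₂ = L₂ * f)
    (J : Ideal (MvPolynomial (Fin 3) ℂ))
    (hJ : J = Ideal.span {X 1 ^ 2 - X 0 * X 2, g₁, g₂}) :
    ∃ α β : MvPolynomial (Fin 3) ℂ, α.IsHomogeneous m ∧ β.IsHomogeneous m ∧
      J = Ideal.span
        {X 0 * X 2 - X 1 ^ 2, X 0 * β - X 1 * α, X 1 * β - X 2 * α} ∧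
      (∀ w : Fin 3 → MvPolynomial (Fin 3) ℂ,
        w 0 * (X 1 * β - X 2 * α) - w 1 * (X 0 * β - X 1 * α) +
            w 2 * (X 0 * X 2 - X 1 ^ 2) = 0 ↔
          w ∈ Submodule.span (MvPolynomial (Fin 3) ℂ)
            ({![X 0, X 1, α], ![X 1, X 2, β]} : Set (Fin 3 → MvPolynomial (Fin 3) ℂ))) ∧
      (∀ p q : MvPolynomial (Fin 3) ℂ,
        p • ![X 0, X 1, α] + q • ![X 1, X 2, β] = 0 → p = 0 ∧ q = 0) := by
  obtain ⟨α, β, hα, hβ, hΔ₂, hΔ₁⟩ := exists_isHomogeneous_veronese_minors_eq hf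
  exact ⟨α, β, hα, hβ, hJ.trans (span_conic_eq_span_minors hL₁ hL₂ hind hg₁f hg₂f hΔ₂ hΔ₁),
    syzygy_iff_mem_span_columns hsq.ne_zero hΔ₂ hΔ₁,
    eq_zero_of_smul_add_smul_columns_eq_zero α β⟩

/-- The ideal `J = ⟨y² − xz, g₁, g₂⟩` of `2m+1` distinct reduced points on
the conic `y² − xz = 0` (with `g₁, g₂` of degree `m+1` obtained from the Veronese
parametrization) is generated, Hilbert–Burch style, by the `2×2` minors of the matrix
with rows `(x,y), (y,z), (α,β)` with `α, β` homogeneous of degree `m`; the first syzygy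
module of these minors is free on the two columns `(x,y,α)` and `(y,z,β)`, giving the
resolution `0 → S(−2−m)² → S(−1−m)² ⊕ S(−2) → S → S/J → 0`. -/
theorem hilbert_burch_points_on_conic
    (m : ℕ) (f : MvPolynomial (Fin 2) ℂ)
    (hf : f.IsHomogeneous (2 * m + 1)) (hsq : Squarefree f)
    (L₁ L₂ : MvPolynomial (Fin 2) ℂ)
    (hL₁ : L₁.IsHomogeneous 1) (hL₂ : L₂.IsHomogeneous 1)
    (hind : LinearIndependent ℂ ![L₁, L₂])
    (hL₁f : ¬ L₁ ∣ f) (hL₂f : ¬ L₂ ∣ f)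
    (g₁ g₂ : MvPolynomial (Fin 3) ℂ)
    (hg₁ : g₁.IsHomogeneous (m + 1)) (hg₂ : g₂.IsHomogeneous (m + 1))
    (hg₁f : aeval ![X 0 ^ 2, X 0 * X 1, X 1 ^ 2] g₁ = L₁ * f)
    (hg₂f : aeval ![X 0 ^ 2, X 0 * X 1, X 1 ^ 2] g₂ = L₂ * f)
    (J : Ideal (MvPolynomial (Fin 3) ℂ))
    (hJ : J = Ideal.span {X 1 ^ 2 - X 0 * X 2, g₁, g₂}) :
    ∃ α β : MvPolynomial (Fin 3) ℂ, α.IsHomogeneous m ∧ β.IsHomogeneous m ∧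
      J = Ideal.span
        {X 0 * X 2 - X 1 ^ 2, X 0 * β - X 1 * α, X 1 * β - X 2 * α} ∧
      (∀ w : Fin 3 → MvPolynomial (Fin 3) ℂ,
        w 0 * (X 1 * β - X 2 * α) - w 1 * (X 0 * β - X 1 * α) +
            w 2 * (X 0 * X 2 - X 1 ^ 2) = 0 ↔
          w ∈ Submodule.span (MvPolynomial (Fin 3) ℂ)
            ({![X 0, X 1, α], ![X 1, X 2, β]} : Set (Fin 3 → MvPolynomial (Fin 3) ℂ))) ∧
      (∀ p q : MvPolynomial (Fin 3) ℂ,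
        p • ![X 0, X 1, α] + q • ![X 1, X 2, β] = 0 → p = 0 ∧ q = 0) :=
  hilbert_burch_points_on_conic_general m f hf hsq L₁ L₂ hL₁ hL₂ hind g₁ g₂ hg₁f hg₂f J hJ
end
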